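/- arXiv:2002.08496 — 3 statements merged into one kernel-verified Lean document; each statement's English description precedes it below -/
import Mathlib

section
/- Let f = (f₁, …, f_n) be a finite sequence of continuous functions ℝ → ℝ, x ≤ y in ℝ, and 1 ≤ m < ℓ ≤ n. Then for any k ∈ {m, m+1, …, ℓ}, the metric composition law holds: f[(x,ℓ)→(y,m)] = sup_{z∈[x,y]} ( f[(x,ℓ)→(z,k)] + f[(z,k)→(y,m)] ). -/
open Set

/-- A jump-time sequence encoding a nonincreasing cadlag path from `(x,l)` to `(y,m)`:
`t i` is the time at which the path jumps from line `i+1` to line `i`, with the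
conventions `t l = x` and `t (m-1) = y`. -/
def IsJumpSeq (x y : ℝ) (m l : ℕ) (t : ℕ → ℝ) : Prop :=
  t l = x ∧ t (m - 1) = y ∧ ∀ i j : ℕ, m - 1 ≤ i → i ≤ j → j ≤ l → t j ≤ t i

/-- Length of the path encoded by the jump-time sequence `t`: the sum of the increments
of `f` along the path, `∑_{i=m}^{l} (f i (t (i-1)) − f i (t i))`. -/
noncomputable def pathLen (f : ℕ → ℝ → ℝ) (m l : ℕ) (t : ℕ → ℝ) : ℝ :=
  ∑ i ∈ Finset.Icc m l, (f i (t (i - 1)) - f i (t i))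

/-- Last passage value `f[(x,l)→(y,m)]`: supremum of path lengths over all paths from
`(x,l)` to `(y,m)`. -/
noncomputable def lppValue (f : ℕ → ℝ → ℝ) (x : ℝ) (l : ℕ) (y : ℝ) (m : ℕ) : ℝ :=
  sSup (pathLen f m l '' {t | IsJumpSeq x y m l t})

/-!
Cutting a path from `(x,ℓ)` to `(y,m)` at the time `z ∈ [x,y]` at which it reaches line `k`
gives a path `(x,ℓ) → (z,k)` and a path `(z,k) → (y,m)` whose lengths add up, and conversely
any two such paths concatenate. So the set of path lengths is the union over `z ∈ [x,y]` of the
Minkowski sums of the two sets of lengths, and taking suprema gives the formula: all these sets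
are nonempty, and bounded above because each `f i` is bounded on the compact interval `[x,y]`.
-/

open scoped Pointwise

theorem csSup_biUnion {α ι : Type*} [ConditionallyCompleteLattice α] {S : Set ι}
    {T : ι → Set α} (hT : ∀ i ∈ S, (T i).Nonempty) (hbdd : BddAbove (⋃ i ∈ S, T i)) :
    sSup (⋃ i ∈ S, T i) = sSup ((fun i => sSup (T i)) '' S) := by
  rcases S.eq_empty_or_nonempty with rfl | ⟨i, hi⟩
  · simp
  have hlub : ∀ i : S, IsLUB (T i) (sSup (T i)) := fun i =>
    isLUB_csSup (hT i i.2) (hbdd.mono (subset_biUnion_of_mem i.2))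
  have hunion : IsLUB (⋃ i ∈ S, T i) (sSup (⋃ i ∈ S, T i)) :=
    isLUB_csSup ((hT i hi).mono (subset_biUnion_of_mem hi)) hbdd
  rw [biUnion_eq_iUnion, ← isLUB_iUnion_iff_of_isLUB hlub] at hunion
  rw [biUnion_eq_iUnion, image_eq_range]
  exact (hunion.csSup_eq ⟨_, ⟨i, hi⟩, rfl⟩).symm

def pathLengths (f : ℕ → ℝ → ℝ) (x : ℝ) (l : ℕ) (y : ℝ) (m : ℕ) : Set ℝ :=
  pathLen f m l '' {t | IsJumpSeq x y m l t}

theorem lppValue_eq_sSup_pathLengths (f : ℕ → ℝ → ℝ) (x : ℝ) (l : ℕ) (y : ℝ) (m : ℕ) :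
    lppValue f x l y m = sSup (pathLengths f x l y m) := rfl

section JumpSeq

variable {x y z : ℝ} {m k l : ℕ}

theorem IsJumpSeq.mem_Icc {t : ℕ → ℝ} (ht : IsJumpSeq x y m l t) {i : ℕ} (hmi : m - 1 ≤ i)
    (hil : i ≤ l) : t i ∈ Icc x y := by
  obtain ⟨hx, hy, hmono⟩ := ht
  exact ⟨hx ▸ hmono i l hmi hil le_rfl, hy ▸ hmono (m - 1) i le_rfl hmi hil⟩

theorem pathLengths_nonempty (f : ℕ → ℝ → ℝ) (hxy : x ≤ y) (hm : 1 ≤ m) (hml : m ≤ l) :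
    (pathLengths f x l y m).Nonempty := by
  refine ⟨_, fun i => if i < m then y else x, ⟨?_, ?_, ?_⟩, rfl⟩
  · simp [hml.not_gt]
  · simp [show m - 1 < m by omega]
  · intro i j _ hij _
    by_cases hj : j < m
    · simp [hj, show i < m by omega]
    · by_cases hi : i < m <;> simp [hi, hj, hxy]

theorem bddAbove_pathLengths {f : ℕ → ℝ → ℝ} (hf : ∀ i, ContinuousOn (f i) (Icc x y)) :
    BddAbove (pathLengths f x l y m) := by
  choose C hC using fun i => isCompact_Icc.exists_bound_of_continuousOn (hf i)
  refine ⟨∑ i ∈ Finset.Icc m l, 2 * C i, ?_⟩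
  rintro _ ⟨t, ht, rfl⟩
  refine Finset.sum_le_sum fun i hi => ?_
  rw [Finset.mem_Icc] at hi
  have h₁ := abs_le.1 (hC i _ (ht.mem_Icc (i := i - 1) (by omega) (by omega)))
  have h₂ := abs_le.1 (hC i _ (ht.mem_Icc (i := i) (by omega) hi.2))
  linarith

def jumpSeqConcat (k : ℕ) (upper lower : ℕ → ℝ) : ℕ → ℝ :=
  fun i => if i < k then lower i else upper i

theorem IsJumpSeq.concat {t' t'' : ℕ → ℝ} (ht' : IsJumpSeq x z k l t')
    (ht'' : IsJumpSeq z y m k t'') (hm : 1 ≤ m) (hmk : m ≤ k) (hkl : k ≤ l) :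
    IsJumpSeq x y m l (jumpSeqConcat k t' t'') := by
  obtain ⟨hx, hz', hmono'⟩ := ht'
  obtain ⟨hz'', hy, hmono''⟩ := ht''
  refine ⟨by simp [jumpSeqConcat, hkl.not_gt, hx], by simp [jumpSeqConcat,
    show m - 1 < k by omega, hy], fun i j hi hij hjl => ?_⟩
  simp only [jumpSeqConcat]
  split_ifs with hjk hik hik
  · exact hmono'' i j hi hij hjk.le
  · omega
  · calc t' j ≤ t' (k - 1) := hmono' _ _ le_rfl (by omega) hjl
      _ = t'' k := hz'.trans hz''.symm
      _ ≤ t'' i := hmono'' _ _ hi hik.le le_rfl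
  · exact hmono' i j (by omega) hij hjl

theorem pathLen_jumpSeqConcat (f : ℕ → ℝ → ℝ) {t' t'' : ℕ → ℝ} (h : t' (k - 1) = t'' k)
    (hm : 1 ≤ m) (hmk : m ≤ k) (hkl : k ≤ l) :
    pathLen f m l (jumpSeqConcat k t' t'') = pathLen f k l t' + pathLen f m k t'' := by
  set d : (ℕ → ℝ) → ℕ → ℝ := fun t i => f i (t (i - 1)) - f i (t i) with hd
  have hsplit : ∀ i ∈ Finset.Icc m l, d (jumpSeqConcat k t' t'') i =
      (if i ≤ k then d t'' i else 0) + (if k ≤ i then d t' i else 0) := by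
    intro i hi
    rw [Finset.mem_Icc] at hi
    rcases lt_trichotomy i k with hik | rfl | hik
    · simp [hd, jumpSeqConcat, hik, hik.le, hik.not_ge, show i - 1 < k by omega]
    · simp [hd, jumpSeqConcat, show i - 1 < i by omega, h]
    · simp [hd, jumpSeqConcat, hik.not_gt, hik.not_ge, hik.le, show ¬ i - 1 < k by omega]
  have hlower : (Finset.Icc m l).filter (· ≤ k) = Finset.Icc m k := by
    ext i; simp only [Finset.mem_filter, Finset.mem_Icc]; omega
  have hupper : (Finset.Icc m l).filter (k ≤ ·) = Finset.Icc k l := by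
    ext i; simp only [Finset.mem_filter, Finset.mem_Icc]; omega
  rw [pathLen, Finset.sum_congr rfl hsplit, Finset.sum_add_distrib, ← Finset.sum_filter,
    ← Finset.sum_filter, hlower, hupper, add_comm]
  rfl

theorem IsJumpSeq.restrict_upper {t : ℕ → ℝ} (ht : IsJumpSeq x y m l t) (hm : 1 ≤ m)
    (hmk : m ≤ k) (hkl : k ≤ l) :
    IsJumpSeq x (t k) k l (jumpSeqConcat k t fun _ => t k) := by
  obtain ⟨hx, -, hmono⟩ := ht
  refine ⟨by simp [jumpSeqConcat, hkl.not_gt, hx], by simp [jumpSeqConcat,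
    show k - 1 < k by omega], fun i j hi hij hjl => ?_⟩
  simp only [jumpSeqConcat]
  split_ifs with hjk hik hik
  · exact le_rfl
  · omega
  · exact hmono k j (by omega) (by omega) hjl
  · exact hmono i j (by omega) hij hjl

theorem IsJumpSeq.restrict_lower {t : ℕ → ℝ} (ht : IsJumpSeq x y m l t) (hkl : k ≤ l) :
    IsJumpSeq (t k) y m k t :=
  ⟨rfl, ht.2.1, fun i j hi hij hjk => ht.2.2 i j hi hij (hjk.trans hkl)⟩

theorem jumpSeqConcat_restrict (t : ℕ → ℝ) (k : ℕ) :
    jumpSeqConcat k (jumpSeqConcat k t fun _ => t k) t = t := by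
  funext i
  by_cases hik : i < k <;> simp [jumpSeqConcat, hik]

theorem pathLengths_eq_biUnion (f : ℕ → ℝ → ℝ) (hm : 1 ≤ m) (hmk : m ≤ k) (hkl : k ≤ l) :
    pathLengths f x l y m = ⋃ z ∈ Icc x y, pathLengths f x l z k + pathLengths f z k y m := by
  ext a
  simp only [mem_iUnion₂, exists_prop]
  constructor
  · rintro ⟨t, ht, rfl⟩
    refine ⟨t k, ht.mem_Icc (by omega) hkl, _, ⟨_, ht.restrict_upper hm hmk hkl, rfl⟩, _,
      ⟨t, ht.restrict_lower hkl, rfl⟩, ?_⟩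
    dsimp only
    rw [← pathLen_jumpSeqConcat f _ hm hmk hkl, jumpSeqConcat_restrict]
    simp [jumpSeqConcat, show k - 1 < k by omega]
  · rintro ⟨z, -, _, ⟨t', ht', rfl⟩, _, ⟨t'', ht'', rfl⟩, rfl⟩
    exact ⟨_, ht'.concat ht'' hm hmk hkl,
      pathLen_jumpSeqConcat f (ht'.2.1.trans ht''.1.symm) hm hmk hkl⟩

end JumpSeq

theorem stmt4_general (f : ℕ → ℝ → ℝ) (hf : ∀ i, Continuous (f i))
    (x y : ℝ)
    (m k l : ℕ) (hm : 1 ≤ m) (hmk : m ≤ k) (hkl : k ≤ l) :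
    lppValue f x l y m
      = sSup ((fun z => lppValue f x l z k + lppValue f z k y m) '' Set.Icc x y) := by
  have hf' : ∀ a b, ∀ i, ContinuousOn (f i) (Icc a b) := fun _ _ i => (hf i).continuousOn
  simp only [lppValue_eq_sSup_pathLengths]
  rw [pathLengths_eq_biUnion f hm hmk hkl, csSup_biUnion]
  · refine congrArg sSup (image_congr fun z hz => ?_)
    exact csSup_add (pathLengths_nonempty f hz.1 (by omega) hkl) (bddAbove_pathLengths (hf' _ _))
      (pathLengths_nonempty f hz.2 hm hmk) (bddAbove_pathLengths (hf' _ _))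
  · exact fun z hz => (pathLengths_nonempty f hz.1 (by omega) hkl).add
      (pathLengths_nonempty f hz.2 hm hmk)
  · rw [← pathLengths_eq_biUnion f hm hmk hkl]
    exact bddAbove_pathLengths (hf' _ _)

theorem stmt4 (n : ℕ) (f : ℕ → ℝ → ℝ) (hf : ∀ i, Continuous (f i))
    (x y : ℝ) (hxy : x ≤ y)
    (m k l : ℕ) (hm : 1 ≤ m) (hml : m < l) (hln : l ≤ n) (hmk : m ≤ k) (hkl : k ≤ l) :
    lppValue f x l y m
      = sSup ((fun z => lppValue f x l z k + lppValue f z k y m) '' Set.Icc x y) :=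
  stmt4_general f hf x y m k l hm hmk hkl
end

section
/- Let B : [0,T] → ℝ be a standard Brownian motion and let f : [0,T] → ℝ be a bounded (deterministic) measurable function such that almost surely the supremum of f(s) + B(s) over (0,T] is attained at some point of (0,T]. Then the law of M := sup_{s∈(0,T]} ( f(s) + B(s) ) is absolutely continuous with respect to Lebesgue measure on ℝ. -/
/-!
For `0 < t ≤ T`, write `sup_{[t,T]} (f + B) = B t + Y`. Sampling `B` on dyadic grids of `[t,T]`
(and replacing `f` on each grid cell by its supremum, a constant) exhibits `Y` as a limit of
functions of the increments `B s - B t`, `s` dyadic, so `Y` is independent of `B t`. The law of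
the supremum over `[t,T]` is then a convolution with the Gaussian law of `B t`, hence absolutely
continuous. Since the supremum over `(0,T]` is almost surely attained, it almost surely equals
the supremum over some `[T/(n+1), T]`, and countably many null events remain null.
-/

open MeasureTheory ProbabilityTheory Set

/-- `B` is a Brownian motion on the time set `S ∋ 0`, started at `b`, with diffusion
parameter `σ2`: continuous paths, Gaussian increments of variance `σ2·(t−s)`, and
independent increments. -/
structure IsBrownianMotionOn {Ω : Type*} [MeasureSpace Ω] (B : Ω → ℝ → ℝ)
    (b σ2 : ℝ) (S : Set ℝ) : Prop where
  cont : ∀ ω, ContinuousOn (B ω) S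
  init : ∀ ω, B ω 0 = b
  gauss : ∀ s t : ℝ, s ∈ S → t ∈ S → s ≤ t →
    Measure.map (fun ω => B ω t - B ω s) ℙ = gaussianReal 0 (Real.toNNReal (σ2 * (t - s)))
  indep : ∀ (n : ℕ) (u : ℕ → ℝ), (∀ i, u i ∈ S) → Monotone u →
    iIndepFun (fun i : Fin n => fun ω => B ω (u (i + 1)) - B ω (u i)) ℙ

open Filter Topology

lemma exists_lt_mem_Icc_succ {α : Type*} [LinearOrder α] {x : ℕ → α} {N : ℕ} (hN : 0 < N)
    {s : α} (hs : s ∈ Icc (x 0) (x N)) : ∃ k < N, s ∈ Icc (x k) (x (k + 1)) := by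
  classical
  have hex : ∃ k, s ≤ x (k + 1) := ⟨N - 1, by rw [Nat.sub_add_cancel hN]; exact hs.2⟩
  refine ⟨Nat.find hex, ?_, ?_, Nat.find_spec hex⟩
  · by_contra! h
    exact Nat.find_min hex (by omega : N - 1 < Nat.find hex)
      (by rw [Nat.sub_add_cancel hN]; exact hs.2)
  · rcases hk : Nat.find hex with _ | k
    · exact hs.1
    · exact (not_le.1 (Nat.find_min hex (hk ▸ k.lt_succ_self))).le

noncomputable def dyadicGrid (a b : ℝ) (n k : ℕ) : ℝ :=
  a + (min k (2 ^ n) : ℕ) * ((b - a) / 2 ^ n)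

section DyadicGrid

variable {a b : ℝ}

@[simp]
lemma dyadicGrid_zero (n : ℕ) : dyadicGrid a b n 0 = a := by simp [dyadicGrid]

@[simp]
lemma dyadicGrid_two_pow (n : ℕ) : dyadicGrid a b n (2 ^ n) = b := by
  simp [dyadicGrid, mul_div_cancel₀ _ (pow_ne_zero n (two_ne_zero' ℝ))]

lemma dyadicGrid_min (n k : ℕ) : dyadicGrid a b n (min k (2 ^ n)) = dyadicGrid a b n k := by
  simp [dyadicGrid]

lemma dyadicGrid_two_mul (n k : ℕ) : dyadicGrid a b (n + 1) (2 * k) = dyadicGrid a b n k := by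
  have h : min (2 * k) (2 ^ (n + 1)) = 2 * min k (2 ^ n) := by rw [pow_succ]; omega
  simp only [dyadicGrid, h]
  push_cast
  rw [pow_succ]
  field_simp

lemma dyadicGrid_succ_sub {n k : ℕ} (hk : k < 2 ^ n) :
    dyadicGrid a b n (k + 1) - dyadicGrid a b n k = (b - a) / 2 ^ n := by
  simp only [dyadicGrid, min_eq_left hk.le, min_eq_left (Nat.succ_le_of_lt hk)]
  push_cast
  ring

lemma monotone_dyadicGrid (hab : a ≤ b) (n : ℕ) : Monotone (dyadicGrid a b n) :=
    fun _ _ hij => by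
  have : 0 ≤ b - a := sub_nonneg.2 hab
  unfold dyadicGrid
  gcongr

lemma dyadicGrid_mem_Icc (hab : a ≤ b) (n k : ℕ) : dyadicGrid a b n k ∈ Icc a b := by
  rw [← dyadicGrid_min]
  constructor
  · simpa using monotone_dyadicGrid hab n (Nat.zero_le (min k (2 ^ n)))
  · simpa using monotone_dyadicGrid hab n (min_le_right k (2 ^ n))

end DyadicGrid

lemma nonempty_range_two_pow (n : ℕ) : (Finset.range (2 ^ n)).Nonempty :=
  Finset.nonempty_range_iff.2 (pow_ne_zero n two_ne_zero)

noncomputable def gridSup (f g : ℝ → ℝ) (a b : ℝ) (n : ℕ) : ℝ :=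
  (Finset.range (2 ^ n)).sup' (nonempty_range_two_pow n) fun k =>
    sSup (f '' Icc (dyadicGrid a b n k) (dyadicGrid a b n (k + 1))) + g (dyadicGrid a b n k)

section GridSup

variable {f g : ℝ → ℝ} {a b : ℝ}

lemma gridSup_sub_const (f g : ℝ → ℝ) (a b c : ℝ) (n : ℕ) :
    gridSup f (fun s => g s - c) a b n = gridSup f g a b n - c := by
  simp only [gridSup, sub_eq_add_neg, Finset.sup'_add, add_assoc]

lemma measurable_gridSup {Ω : Type*} {m : MeasurableSpace Ω} (f : ℝ → ℝ)
    {g : Ω → ℝ → ℝ} (a b : ℝ) (n : ℕ)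
    (hg : ∀ k, Measurable fun ω => g ω (dyadicGrid a b n k)) :
    Measurable fun ω => gridSup f (g ω) a b n := by
  have := Finset.measurable_sup' (nonempty_range_two_pow n) (f := fun k ω =>
    sSup (f '' Icc (dyadicGrid a b n k) (dyadicGrid a b n (k + 1))) + g ω (dyadicGrid a b n k))
    fun k _ => measurable_const.add (hg k)
  convert this using 1
  funext ω
  rw [Finset.sup'_apply]
  rfl

lemma abs_gridSup_sub_sSup_le (hab : a ≤ b) (hf : BddAbove (f '' Icc a b))
    (hfg : BddAbove ((fun s => f s + g s) '' Icc a b)) {n : ℕ} {ε : ℝ}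
    (hg : ∀ k < 2 ^ n, ∀ s ∈ Icc (dyadicGrid a b n k) (dyadicGrid a b n (k + 1)),
      |g s - g (dyadicGrid a b n k)| ≤ ε) :
    |gridSup f g a b n - sSup ((fun s => f s + g s) '' Icc a b)| ≤ ε := by
  set x := dyadicGrid a b n
  set M := sSup ((fun s => f s + g s) '' Icc a b)
  have hcell : ∀ k, Icc (x k) (x (k + 1)) ⊆ Icc a b := fun k =>
    Icc_subset_Icc (dyadicGrid_mem_Icc hab n k).1 (dyadicGrid_mem_Icc hab n (k + 1)).2
  rw [abs_sub_le_iff]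
  constructor
  · refine sub_le_iff_le_add.2 (Finset.sup'_le _ _ fun k hk => le_sub_iff_add_le.1 ?_)
    refine csSup_le ((nonempty_Icc.2 (monotone_dyadicGrid hab n k.le_succ)).image f) ?_
    rintro _ ⟨s, hs, rfl⟩
    linarith [le_csSup hfg (mem_image_of_mem _ (hcell k hs)),
      (abs_le.1 (hg k (Finset.mem_range.1 hk) s hs)).1]
  · refine sub_le_iff_le_add'.2 (csSup_le ((nonempty_Icc.2 hab).image _) ?_)
    rintro _ ⟨s, hs, rfl⟩
    obtain ⟨k, hk, hsk⟩ := exists_lt_mem_Icc_succ (x := x) (pow_pos two_pos n)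
      (by simpa [x] using hs)
    calc f s + g s ≤ sSup (f '' Icc (x k) (x (k + 1))) + g (x k) + ε := by
          linarith [le_csSup (hf.mono (image_mono (hcell k))) (mem_image_of_mem f hsk),
            (abs_le.1 (hg k hk s hsk)).2]
      _ ≤ gridSup f g a b n + ε := by
          gcongr
          exact Finset.le_sup' (fun k => sSup (f '' Icc (x k) (x (k + 1))) + g (x k))
            (Finset.mem_range.2 hk)

lemma tendsto_gridSup (hab : a ≤ b) (hf : BddAbove (f '' Icc a b))
    (hg : ContinuousOn g (Icc a b)) :
    Tendsto (gridSup f g a b) atTop (𝓝 (sSup ((fun s => f s + g s) '' Icc a b))) := by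
  have hfg : BddAbove ((fun s => f s + g s) '' Icc a b) := by
    obtain ⟨C, hC⟩ := hf
    obtain ⟨D, hD⟩ := isCompact_Icc.bddAbove_image hg
    exact ⟨C + D, forall_mem_image.2 fun s hs =>
      add_le_add (hC (mem_image_of_mem f hs)) (hD (mem_image_of_mem g hs))⟩
  refine Metric.tendsto_nhds.2 fun ε hε => ?_
  obtain ⟨δ, hδ, hgδ⟩ := Metric.uniformContinuousOn_iff.1
    (isCompact_Icc.uniformContinuousOn_of_continuous hg) (ε / 2) (half_pos hε)
  have hmesh : ∀ᶠ n : ℕ in atTop, (b - a) / 2 ^ n < δ :=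
    (tendsto_const_nhds.div_atTop (tendsto_pow_atTop_atTop_of_one_lt one_lt_two)).eventually
      (gt_mem_nhds hδ)
  filter_upwards [hmesh] with n hn
  refine (abs_gridSup_sub_sSup_le hab hf hfg fun k hk s hs => ?_).trans_lt (half_lt_self hε)
  have hx := dyadicGrid_mem_Icc hab n k
  have hs' := Icc_subset_Icc hx.1 (dyadicGrid_mem_Icc hab n (k + 1)).2 hs
  have hdist : dist s (dyadicGrid a b n k) < δ := by
    rw [Real.dist_eq, abs_of_nonneg (sub_nonneg.2 hs.1)]
    linarith [hs.2, dyadicGrid_succ_sub (a := a) (b := b) hk]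
  exact (hgδ s hs' _ hx hdist).le

end GridSup

lemma measurable_sSup_image_add {Ω : Type*} [MeasurableSpace Ω] {B : Ω → ℝ → ℝ}
    {f : ℝ → ℝ} {a b : ℝ} (hBmeas : ∀ s, Measurable fun ω => B ω s)
    (hcont : ∀ ω, ContinuousOn (B ω) (Icc a b)) (hab : a ≤ b) (hf : BddAbove (f '' Icc a b)) :
    Measurable fun ω => sSup ((fun s => f s + B ω s) '' Icc a b) :=
  measurable_of_tendsto_metrizable (fun n => measurable_gridSup f a b n fun _ => hBmeas _)
    (tendsto_pi_nhds.2 fun ω => tendsto_gridSup hab hf (hcont ω))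

noncomputable abbrev dyadicIncrementSigma {Ω : Type*}
    (B : Ω → ℝ → ℝ) (t T : ℝ) (n : ℕ) : MeasurableSpace Ω :=
  ⨆ k, MeasurableSpace.comap (fun ω => B ω (dyadicGrid t T n k) - B ω t) inferInstance

section DyadicIncrementSigma

variable {Ω : Type*} {B : Ω → ℝ → ℝ} {t T : ℝ}

lemma measurable_dyadicIncrementSigma (n k : ℕ) :
    Measurable[dyadicIncrementSigma B t T n] fun ω => B ω (dyadicGrid t T n k) - B ω t :=
  (comap_measurable _).mono (le_iSup (fun k => MeasurableSpace.comap
    (fun ω => B ω (dyadicGrid t T n k) - B ω t) inferInstance) k) le_rfl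

lemma dyadicIncrementSigma_le [m : MeasurableSpace Ω] (hBmeas : ∀ s, Measurable fun ω => B ω s)
    (n : ℕ) : dyadicIncrementSigma B t T n ≤ m :=
  iSup_le fun _ => ((hBmeas _).sub (hBmeas t)).comap_le

lemma monotone_dyadicIncrementSigma : Monotone (dyadicIncrementSigma B t T) :=
  monotone_nat_of_le_succ fun n => iSup_le fun k => by
    simpa only [dyadicGrid_two_mul] using
      (measurable_dyadicIncrementSigma (B := B) (t := t) (T := T) (n + 1) (2 * k)).comap_le

end DyadicIncrementSigma

namespace IsBrownianMotionOn

variable {Ω : Type*} [MeasureSpace Ω] {B : Ω → ℝ → ℝ} {b σ2 t T : ℝ} {S : Set ℝ}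

lemma indep_comap_increments (hB : IsBrownianMotionOn B b σ2 S)
    (hBmeas : ∀ s, Measurable fun ω => B ω s) {u : ℕ → ℝ} (hu : ∀ i, u i ∈ S)
    (hmono : Monotone u) (m : ℕ) :
    Indep (MeasurableSpace.comap (fun ω => B ω (u 1) - B ω (u 0)) inferInstance)
      (⨆ k ∈ Icc 1 m, MeasurableSpace.comap (fun ω => B ω (u k) - B ω (u 1)) inferInstance)
      ℙ := by
  set Z : Fin (m + 1) → Ω → ℝ := fun i ω => B ω (u (i + 1)) - B ω (u i)
  have hZ : ∀ i, Measurable (Z i) := fun i => (hBmeas _).sub (hBmeas _)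
  have hindep := indep_iSup_of_disjoint (fun i => (hZ i).comap_le)
    ((iIndepFun_iff_iIndep _ Z ℙ).1 (hB.indep (m + 1) u hu hmono))
    (disjoint_compl_right (a := ({0} : Set (Fin (m + 1)))))
  have hincr : ∀ k, 1 ≤ k → k ≤ m + 1 →
      Measurable[⨆ i ∈ ({0} : Set (Fin (m + 1)))ᶜ, MeasurableSpace.comap (Z i) inferInstance]
        fun ω => B ω (u k) - B ω (u 1) := by
    refine Nat.le_induction (fun _ => by simp) fun k hk ih hkm => ?_
    have hZk : Measurable[⨆ i ∈ ({0} : Set (Fin (m + 1)))ᶜ,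
        MeasurableSpace.comap (Z i) inferInstance] (Z ⟨k, by omega⟩) :=
      (comap_measurable _).mono (le_iSup₂ (f := fun i (_ : i ∈ ({0} : Set (Fin (m + 1)))ᶜ) =>
        MeasurableSpace.comap (Z i) inferInstance) ⟨k, by omega⟩
          (by simp [Fin.ext_iff]; omega)) le_rfl
    convert hZk.add (ih (by omega)) using 1
    funext ω
    simp only [Z, Pi.add_apply]
    ring
  refine indep_of_indep_of_le_right (indep_of_indep_of_le_left hindep ?_) ?_
  · exact le_iSup₂ (f := fun i (_ : i ∈ ({0} : Set (Fin (m + 1)))) =>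
      MeasurableSpace.comap (Z i) inferInstance) 0 rfl
  · exact iSup₂_le fun k hk => (hincr k hk.1 (hk.2.trans m.le_succ)).comap_le

lemma map_eq_gaussianReal (hB : IsBrownianMotionOn B 0 σ2 S) (h0 : 0 ∈ S) (ht : t ∈ S)
    (ht0 : 0 ≤ t) : Measure.map (fun ω => B ω t) ℙ = gaussianReal 0 (σ2 * t).toNNReal := by
  simpa [hB.init] using hB.gauss 0 t h0 ht ht0

lemma indep_dyadicIncrementSigma (hB : IsBrownianMotionOn B 0 σ2 (Icc 0 T))
    (hBmeas : ∀ s, Measurable fun ω => B ω s) (ht : 0 ≤ t) (htT : t ≤ T) (n : ℕ) :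
    Indep (dyadicIncrementSigma B t T n)
      (MeasurableSpace.comap (fun ω => B ω t) inferInstance) ℙ := by
  -- times `0, t, ..., T`: the first increment is `B t`, the later ones are increments after `t`
  set u : ℕ → ℝ := fun j => if j = 0 then 0 else dyadicGrid t T n (j - 1)
  have hu : ∀ j, u j ∈ Icc 0 T := fun j => by
    by_cases hj : j = 0
    · simpa [u, hj] using ht.trans htT
    · simpa [u, hj] using Icc_subset_Icc_left ht (dyadicGrid_mem_Icc htT n (j - 1))
  have hmono : Monotone u := monotone_nat_of_le_succ fun j => by
    by_cases hj : j = 0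
    · simpa [u, hj] using ht
    · simpa [u, hj] using monotone_dyadicGrid htT n (Nat.sub_le j 1)
  have hindep := hB.indep_comap_increments hBmeas hu hmono (2 ^ n + 1)
  have hX : (fun ω => B ω (u 1) - B ω (u 0)) = fun ω => B ω t := by
    funext ω
    simp [u, hB.init]
  rw [hX] at hindep
  refine indep_of_indep_of_le_left hindep.symm (iSup_le fun k => ?_)
  have hk : (fun ω => B ω (dyadicGrid t T n k) - B ω t) =
      fun ω => B ω (u (min k (2 ^ n) + 1)) - B ω (u 1) := by
    funext ω
    simp [u, dyadicGrid_min]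
  rw [hk]
  exact le_iSup₂ (f := fun j (_ : j ∈ Icc 1 (2 ^ n + 1)) => MeasurableSpace.comap
    (fun ω => B ω (u j) - B ω (u 1)) inferInstance) (min k (2 ^ n) + 1)
    ⟨Nat.le_add_left 1 _, Nat.add_le_add_right (min_le_right _ _) 1⟩

lemma indep_iSup_dyadicIncrementSigma [IsProbabilityMeasure (ℙ : Measure Ω)]
    (hB : IsBrownianMotionOn B 0 σ2 (Icc 0 T)) (hBmeas : ∀ s, Measurable fun ω => B ω s)
    (ht : 0 ≤ t) (htT : t ≤ T) :
    Indep (⨆ n, dyadicIncrementSigma B t T n)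
      (MeasurableSpace.comap (fun ω => B ω t) inferInstance) ℙ :=
  indep_iSup_of_monotone (hB.indep_dyadicIncrementSigma hBmeas ht htT)
    (dyadicIncrementSigma_le hBmeas) (hBmeas t).comap_le monotone_dyadicIncrementSigma

lemma absolutelyContinuous_map_sSup_image_add [IsProbabilityMeasure (ℙ : Measure Ω)]
    (hB : IsBrownianMotionOn B 0 σ2 (Icc 0 T)) (hσ : 0 < σ2)
    (hBmeas : ∀ s, Measurable fun ω => B ω s) {f : ℝ → ℝ} (hf : BddAbove (f '' Icc t T))
    (ht : 0 < t) (htT : t ≤ T) :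
    Measure.map (fun ω => sSup ((fun s => f s + B ω s) '' Icc t T)) ℙ ≪ volume := by
  set M := fun ω => sSup ((fun s => f s + B ω s) '' Icc t T)
  set X := fun ω => B ω t
  have hcont : ∀ ω, ContinuousOn (B ω) (Icc t T) :=
    fun ω => (hB.cont ω).mono (Icc_subset_Icc_left ht.le)
  have hY : Measurable[⨆ n, dyadicIncrementSigma B t T n] (M - X) := by
    refine @measurable_of_tendsto_metrizable Ω ℝ (⨆ n, dyadicIncrementSigma B t T n) _ _ _ _
      _ _ (fun n => ?_)
      (tendsto_pi_nhds.2 fun ω => (tendsto_gridSup htT hf (hcont ω)).sub_const (B ω t))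
    simp_rw [← gridSup_sub_const]
    exact (measurable_gridSup f t T n (measurable_dyadicIncrementSigma n)).mono
      (le_iSup (dyadicIncrementSigma B t T) n) le_rfl
  have hYX : IndepFun (M - X) X ℙ := by
    rw [IndepFun_iff_Indep]
    exact indep_of_indep_of_le_left (hB.indep_iSup_dyadicIncrementSigma hBmeas ht.le htT)
      hY.comap_le
  have hX : Measure.map X ℙ ≪ volume := by
    rw [hB.map_eq_gaussianReal ⟨le_rfl, ht.le.trans htT⟩ ⟨ht.le, htT⟩ ht.le]
    exact gaussianReal_absolutelyContinuous 0 (by simp [mul_pos hσ ht])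
  rw [← sub_add_cancel M X, hYX.map_add_eq_map_conv_map
    (hY.mono (iSup_le (dyadicIncrementSigma_le hBmeas)) le_rfl) (hBmeas t)]
  exact Measure.conv_absolutelyContinuous hX

end IsBrownianMotionOn

lemma MeasureTheory.Measure.absolutelyContinuous_map_of_ae_exists_eq {α β ι : Type*}
    [Countable ι] {mα : MeasurableSpace α} {mβ : MeasurableSpace β} {μ : Measure α}
    {ν : Measure β} {F : α → β} {g : ι → α → β} (hg : ∀ i, Measurable (g i))
    (hac : ∀ i, μ.map (g i) ≪ ν)
    (hF : ∀ᵐ a ∂μ, ∃ i, F a = g i a) : μ.map F ≪ ν := by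
  refine Measure.AbsolutelyContinuous.mk fun N hN hN0 => ?_
  by_cases hFm : AEMeasurable F μ
  · have hnull : ∀ i, ∀ᵐ a ∂μ, a ∉ g i ⁻¹' N := fun i =>
      measure_eq_zero_iff_ae_notMem.1 (by rw [← Measure.map_apply (hg i) hN]; exact hac i hN0)
    rw [Measure.map_apply_of_aemeasurable hFm hN, measure_eq_zero_iff_ae_notMem]
    filter_upwards [hF, ae_all_iff.2 hnull] with a ⟨i, hi⟩ ha
    simpa [mem_preimage, hi] using ha i
  · simp [Measure.map_of_not_aemeasurable hFm]

lemma sSup_image_eq_of_forall_le {α β : Type*} [ConditionallyCompleteLattice β] {h : α → β}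
    {I J : Set α} {s : α} (hJI : J ⊆ I) (hs : s ∈ J) (hmax : ∀ u ∈ I, h u ≤ h s) :
    sSup (h '' I) = sSup (h '' J) := by
  rw [IsGreatest.csSup_eq ⟨mem_image_of_mem h (hJI hs), forall_mem_image.2 hmax⟩,
    IsGreatest.csSup_eq ⟨mem_image_of_mem h hs, forall_mem_image.2 fun u hu => hmax u (hJI hu)⟩]

theorem stmt7_general {Ω : Type*} [MeasureSpace Ω] [IsProbabilityMeasure (ℙ : Measure Ω)]
    (T : ℝ) (hT : 0 < T)
    (B : Ω → ℝ → ℝ) (hB : IsBrownianMotionOn B 0 1 (Set.Icc 0 T))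
    (hBmeas : Measurable fun ω => (B ω : ℝ → ℝ))
    (f : ℝ → ℝ) (hfbdd : ∃ C : ℝ, ∀ s ∈ Set.Icc 0 T, |f s| ≤ C)
    (hattain : ∀ᵐ ω ∂ℙ, ∃ s ∈ Set.Ioc 0 T, ∀ u ∈ Set.Ioc 0 T,
        f u + B ω u ≤ f s + B ω s) :
    Measure.map (fun ω => sSup ((fun s => f s + B ω s) '' Set.Ioc 0 T)) ℙ
      ≪ (volume : Measure ℝ) := by
  have hBt : ∀ s, Measurable fun ω => B ω s := fun s => (measurable_pi_apply s).comp hBmeas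
  obtain ⟨C, hC⟩ := hfbdd
  set t : ℕ → ℝ := fun n => T / (n + 1)
  have ht : ∀ n, 0 < t n := fun n => div_pos hT n.cast_add_one_pos
  have htT : ∀ n, t n ≤ T := fun n => div_le_self hT.le (le_add_of_nonneg_left n.cast_nonneg)
  have hf : ∀ n, BddAbove (f '' Icc (t n) T) := fun n =>
    ⟨C, forall_mem_image.2 fun s hs =>
      (le_abs_self _).trans (hC s ⟨(ht n).le.trans hs.1, hs.2⟩)⟩
  refine Measure.absolutelyContinuous_map_of_ae_exists_eq
    (fun n => measurable_sSup_image_add hBt (fun ω => (hB.cont ω).mono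
      (Icc_subset_Icc_left (ht n).le)) (htT n) (hf n))
    (fun n => hB.absolutelyContinuous_map_sSup_image_add one_pos hBt (hf n) (ht n) (htT n)) ?_
  filter_upwards [hattain] with ω ⟨s, hs, hmax⟩
  obtain ⟨n, hn⟩ := exists_nat_one_div_lt (div_pos hs.1 hT)
  have hts : t n ≤ s :=
    calc t n = T * (1 / (n + 1)) := (mul_one_div T _).symm
      _ ≤ T * (s / T) := by gcongr
      _ = s := mul_div_cancel₀ s hT.ne'
  exact ⟨n, sSup_image_eq_of_forall_le (fun u hu => ⟨(ht n).trans_le hu.1, hu.2⟩)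
    ⟨hts, hs.2⟩ hmax⟩

theorem stmt7 {Ω : Type*} [MeasureSpace Ω] [IsProbabilityMeasure (ℙ : Measure Ω)]
    (T : ℝ) (hT : 0 < T)
    (B : Ω → ℝ → ℝ) (hB : IsBrownianMotionOn B 0 1 (Set.Icc 0 T))
    (hBmeas : Measurable fun ω => (B ω : ℝ → ℝ))
    (f : ℝ → ℝ) (hfmeas : Measurable f) (hfbdd : ∃ C : ℝ, ∀ s ∈ Set.Icc 0 T, |f s| ≤ C)
    (hattain : ∀ᵐ ω ∂ℙ, ∃ s ∈ Set.Ioc 0 T, ∀ u ∈ Set.Ioc 0 T,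
        f u + B ω u ≤ f s + B ω s) :
    Measure.map (fun ω => sSup ((fun s => f s + B ω s) '' Set.Ioc 0 T)) ℙ
      ≪ (volume : Measure ℝ) :=
  stmt7_general T hT B hB hBmeas f hfbdd hattain
end

section
/- Let h₀ : ℝ → ℝ ∪ {−∞} with h₀ ≢ −∞ be such that h₀ is bounded above on compacts but not t₀-finitary, i.e., (h₀(x) − x²/t₀)/|x| does not tend to −∞ as |x| → ∞. Then there exist a > −∞ and a sequence x_n with |x_n| → ∞ such that h₀(x_n) − x_n²/t₀ > a|x_n| for all n; and for any continuous function L : ℝ → ℝ satisfying |L(x) + (x−y)²/t₀| ≤ C(1+|x|^{1/5}) for fixed y with ∓2y/t₀ < a (sign matching the sign of ±x_n → ±∞) and some C, one has sup_x ( h₀(x) + L(x) ) = +∞. -/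
open Set Filter

/-! Failure of finitarity yields `a` and points `x` with `|x| → ∞` where `h₀(x) > x²/t₀ + a|x|`;
passing to a subsequence they all lie on one side, `σ x → +∞`. At such a point the quadratic terms
of `h₀(x) + L(x)` cancel up to `σ (2y/t₀) |x| - y²/t₀`, leaving the linear growth
`(a + σ 2y/t₀) |x|`, positive by assumption, against an error of order `|x|^{1/5}`. -/

theorem exists_sign_subseq_tendsto_atTop {f : ℕ → ℝ}
    (hf : Tendsto (fun n => |f n|) atTop atTop) :
    ∃ σ : ℝ, (σ = 1 ∨ σ = -1) ∧ ∃ φ : ℕ → ℕ, StrictMono φ ∧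
      Tendsto (fun n => σ * f (φ n)) atTop atTop := by
  have hsub : ∀ φ : ℕ → ℕ, StrictMono φ → Tendsto (fun n => |f (φ n)|) atTop atTop :=
    fun φ hφ => hf.comp hφ.tendsto_atTop
  by_cases hfreq : ∃ᶠ n in atTop, 0 ≤ f n
  · obtain ⟨φ, hφ, hnonneg⟩ := extraction_of_frequently_atTop hfreq
    refine ⟨1, Or.inl rfl, φ, hφ, (hsub φ hφ).congr fun n => ?_⟩
    rw [one_mul, abs_of_nonneg (hnonneg n)]
  · obtain ⟨φ, hφ, hneg⟩ := extraction_of_eventually_atTop (not_frequently.mp hfreq)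
    refine ⟨-1, Or.inr rfl, φ, hφ, (hsub φ hφ).congr fun n => ?_⟩
    rw [abs_of_neg (not_le.mp (hneg n)), neg_one_mul]

theorem exists_sign_seq_tendsto_atTop_of_forall_exists_le_abs {P : ℝ → Prop}
    (h : ∀ N : ℝ, ∃ x, N ≤ |x| ∧ P x) :
    ∃ σ : ℝ, (σ = 1 ∨ σ = -1) ∧ ∃ x : ℕ → ℝ,
      Tendsto (fun n => σ * x n) atTop atTop ∧ ∀ n, P (x n) := by
  choose f hf_abs hf_P using fun n : ℕ => h n
  have hf : Tendsto (fun n => |f n|) atTop atTop :=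
    tendsto_atTop_mono hf_abs tendsto_natCast_atTop_atTop
  obtain ⟨σ, hσ, φ, hφ, hlim⟩ := exists_sign_subseq_tendsto_atTop hf
  exact ⟨σ, hσ, f ∘ φ, hlim, fun n => hf_P (φ n)⟩

theorem sign_mul_eq_abs {σ u : ℝ} (hσ : σ = 1 ∨ σ = -1) (h : 0 ≤ σ * u) : σ * u = |u| := by
  rcases hσ with rfl | rfl
  · rw [one_mul] at h ⊢; exact (abs_of_nonneg h).symm
  · rw [neg_one_mul] at h ⊢; exact (abs_of_nonpos (neg_nonneg.mp h)).symm

theorem tendsto_mul_sub_mul_rpow_atTop {ε C p : ℝ} (hε : 0 < ε) (hp₀ : 0 < p) (hp₁ : p < 1) :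
    Tendsto (fun r : ℝ => ε * r - C * r ^ p) atTop atTop := by
  have hfactor : Tendsto (fun r : ℝ => r ^ p * (ε * r ^ (1 - p) - C)) atTop atTop :=
    (tendsto_rpow_atTop hp₀).atTop_mul_atTop₀ <| tendsto_atTop_add_const_right _ (-C) <|
      (tendsto_rpow_atTop (sub_pos.mpr hp₁)).const_mul_atTop hε
  refine hfactor.congr' ?_
  filter_upwards [eventually_gt_atTop (0 : ℝ)] with r hr
  rw [mul_sub, mul_left_comm, ← Real.rpow_add hr, add_sub_cancel, Real.rpow_one, mul_comm C]

theorem sub_le_add_abs_mul_add_sq_div {a t y C σ u l : ℝ} (hσ : σ = 1 ∨ σ = -1)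
    (hσu : σ * u = |u|) (hl : |l + (u - y) ^ 2 / t| ≤ C * (1 + |u| ^ ((1 : ℝ) / 5))) :
    (a + σ * (2 * y) / t) * |u| - C * |u| ^ ((1 : ℝ) / 5) - C - y ^ 2 / t
      ≤ a * |u| + u ^ 2 / t + l := by
  have hlower := (abs_le.mp hl).1
  have hcross : σ * (2 * y) / t * |u| = 2 * y * u / t := by
    rw [← hσu]; rcases hσ with rfl | rfl <;> ring
  have hsq : u ^ 2 / t - (u - y) ^ 2 / t = 2 * y * u / t - y ^ 2 / t := by ring
  linarith

theorem EReal.coe_lt_add_coe_of_coe_le {M c l : ℝ} {h : EReal} (hc : (c : EReal) ≤ h)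
    (hM : M < c + l) : (M : EReal) < h + l :=
  calc (M : EReal) < ((c + l : ℝ) : EReal) := EReal.coe_lt_coe_iff.mpr hM
    _ = c + l := EReal.coe_add c l
    _ ≤ h + l := add_le_add_left hc _

theorem stmt15_general (t₀ : ℝ) (h₀ : ℝ → EReal)
    -- `h₀` is not `t₀`-finitary: `(h₀(x) − x²/t₀)/|x|` does not tend to `−∞`.
    (hnotfin : ¬ ∀ M : ℝ, ∃ N : ℝ, ∀ x : ℝ, N ≤ |x| →
        h₀ x ≤ ((x ^ 2 / t₀ + M * |x| : ℝ) : EReal)) :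
    ∃ (a : ℝ) (σ : ℝ) (x : ℕ → ℝ), (σ = 1 ∨ σ = -1) ∧
      Tendsto (fun n => σ * x n) atTop atTop ∧
      (∀ n, ((a * |x n| + (x n) ^ 2 / t₀ : ℝ) : EReal) < h₀ (x n)) ∧
      ∀ (y C : ℝ) (L : ℝ → ℝ), Continuous L →
        (∀ z : ℝ, |L z + (z - y) ^ 2 / t₀| ≤ C * (1 + |z| ^ ((1 : ℝ) / 5))) →
        -σ * (2 * y) / t₀ < a →
        ∀ M : ℝ, ∃ z : ℝ, (M : EReal) < h₀ z + ((L z : ℝ) : EReal) := by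
  push Not at hnotfin
  obtain ⟨a, ha⟩ := hnotfin
  obtain ⟨σ, hσ, x, hx, hxa⟩ :=
    exists_sign_seq_tendsto_atTop_of_forall_exists_le_abs
      (P := fun z => ((a * |z| + z ^ 2 / t₀ : ℝ) : EReal) < h₀ z)
      fun N => (ha N).imp fun z hz => ⟨hz.1, by rw [add_comm]; exact hz.2⟩
  refine ⟨a, σ, x, hσ, hx, hxa, fun y C L _ hL hya M => ?_⟩
  have hε : 0 < a + σ * (2 * y) / t₀ := by rw [neg_mul, neg_div] at hya; linarith
  have hgrowth := (tendsto_mul_sub_mul_rpow_atTop (C := C) hε (p := 1 / 5)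
    (by norm_num) (by norm_num)).comp hx
  obtain ⟨n, hn, hpos⟩ :=
    ((hgrowth.eventually_gt_atTop (M + C + y ^ 2 / t₀)).and (hx.eventually_ge_atTop 0)).exists
  have hσx := sign_mul_eq_abs hσ hpos
  rw [Function.comp_apply, hσx] at hn
  refine ⟨x n, EReal.coe_lt_add_coe_of_coe_le (hxa n).le ?_⟩
  linarith [sub_le_add_abs_mul_add_sq_div (a := a) hσ hσx (hL (x n))]

theorem stmt15 (t₀ : ℝ) (ht₀ : 0 < t₀) (h₀ : ℝ → EReal)
    (hne : ∃ x, h₀ x ≠ ⊥)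
    (hbdd : ∀ K : Set ℝ, IsCompact K → ∃ M : ℝ, ∀ x ∈ K, h₀ x ≤ (M : EReal))
    -- `h₀` is not `t₀`-finitary: `(h₀(x) − x²/t₀)/|x|` does not tend to `−∞`.
    (hnotfin : ¬ ∀ M : ℝ, ∃ N : ℝ, ∀ x : ℝ, N ≤ |x| →
        h₀ x ≤ ((x ^ 2 / t₀ + M * |x| : ℝ) : EReal)) :
    ∃ (a : ℝ) (σ : ℝ) (x : ℕ → ℝ), (σ = 1 ∨ σ = -1) ∧
      Tendsto (fun n => σ * x n) atTop atTop ∧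
      (∀ n, ((a * |x n| + (x n) ^ 2 / t₀ : ℝ) : EReal) < h₀ (x n)) ∧
      ∀ (y C : ℝ) (L : ℝ → ℝ), Continuous L →
        (∀ z : ℝ, |L z + (z - y) ^ 2 / t₀| ≤ C * (1 + |z| ^ ((1 : ℝ) / 5))) →
        -σ * (2 * y) / t₀ < a →
        ∀ M : ℝ, ∃ z : ℝ, (M : EReal) < h₀ z + ((L z : ℝ) : EReal) :=
  stmt15_general t₀ h₀ hnotfin
end
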